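/- Let m, n, k be positive integers with k ≤ n and let v, w ∈ ℂ^m ⊗ ℂ^n be unit vectors with SR(v) ≤ k and SR(w) ≤ k. Then there exist matrices A, B ∈ M_{k,n} with ‖A‖ ≤ 1 and ‖B‖ ≤ 1 such that for every X ∈ M_m ⊗ M_n, ‖(I_m ⊗ A) X (I_m ⊗ B^*)‖ ≥ |⟨v, X w⟩|. (This is the '≥' direction in the proof of Theorem 3.1: using the Schmidt decompositions of v and w, the matrices whose rows are the Schmidt vectors of v and w on the second factor work.) -/

import Mathlib

open scoped ComplexOrder Kronecker
open Matrix

noncomputable section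

/-- The standard inner product `⟨v, w⟩ = ∑ conj(vᵢ) wᵢ` on `I → ℂ`. -/
def inprod {I : Type*} [Fintype I] (v w : I → ℂ) : ℂ :=
  ∑ i, (starRingEnd ℂ) (v i) * w i

/-- `v` is a unit vector. -/
def UnitVec {I : Type*} [Fintype I] (v : I → ℂ) : Prop :=
  inprod v v = 1

/-- The Schmidt rank of a vector in `ℂ^I ⊗ ℂ^J`, i.e. the rank of the associated
`I × J` coefficient matrix. -/
noncomputable def SchmidtRank {I J : Type*} [Fintype I] [Fintype J] (v : I × J → ℂ) : ℕ :=
  (Matrix.of fun i j => v (i, j)).rank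

/-- The operator norm (largest singular value) of a matrix, as
`sup { |⟨v, A w⟩| : v, w unit vectors }`. -/
noncomputable def opNorm {I J : Type*} [Fintype I] [Fintype J] (A : Matrix I J ℂ) : ℝ :=
  sSup { t : ℝ | ∃ v w, UnitVec v ∧ UnitVec w ∧ t = ‖inprod v (A.mulVec w)‖ }

/-- The `S(k)`-norm of `X ∈ M_I ⊗ M_J`. -/
noncomputable def SNorm {I J : Type*} [Fintype I] [Fintype J] (k : ℕ)
    (X : Matrix (I × J) (I × J) ℂ) : ℝ :=
  sSup { t : ℝ | ∃ v w : I × J → ℂ, UnitVec v ∧ UnitVec w ∧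
    SchmidtRank v ≤ k ∧ SchmidtRank w ≤ k ∧
    t = ‖inprod v (X.mulVec w)‖ }

/-- `X` is a `k`-block positive (Hermitian) operator: `⟨v, X v⟩ ≥ 0` for every
vector of Schmidt rank at most `k`. -/
def kBlockPos {I J : Type*} [Fintype I] [Fintype J] (k : ℕ)
    (X : Matrix (I × J) (I × J) ℂ) : Prop :=
  X.IsHermitian ∧ ∀ v : I × J → ℂ, SchmidtRank v ≤ k → 0 ≤ inprod v (X.mulVec v)

/-- `ρ` has Schmidt number at most `k` (in particular it is positive semidefinite):
it is a finite nonnegative combination of rank-one projections onto vectors of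
Schmidt rank at most `k`. -/
def SchmidtNumberLE {I J : Type*} [Fintype I] [Fintype J] (k : ℕ)
    (ρ : Matrix (I × J) (I × J) ℂ) : Prop :=
  ∃ (N : ℕ) (c : Fin N → ℝ) (v : Fin N → (I × J → ℂ)),
    (∀ i, 0 ≤ c i) ∧ (∀ i, SchmidtRank (v i) ≤ k) ∧
    ρ = ∑ i, (c i : ℂ) • Matrix.vecMulVec (v i) (star (v i))

/-- `id_I ⊗ Φ` : the map applying `Φ` to the second tensor factor. -/
noncomputable def tensorId {I : Type*} [Fintype I] {a b : ℕ}
    (Φ : Matrix (Fin a) (Fin a) ℂ →ₗ[ℂ] Matrix (Fin b) (Fin b) ℂ)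
    (X : Matrix (I × Fin a) (I × Fin a) ℂ) : Matrix (I × Fin b) (I × Fin b) ℂ :=
  Matrix.of fun p q => Φ (Matrix.of fun s t => X (p.1, s) (q.1, t)) p.2 q.2

/-- The trace norm `‖X‖_tr = Tr √(X^* X)`. -/
noncomputable def trNorm {I : Type*} [Fintype I] [DecidableEq I] (X : Matrix I I ℂ) : ℝ :=
  (((Matrix.posSemidef_conjTranspose_mul_self X).1.eigenvectorUnitary : Matrix I I ℂ) *
    Matrix.diagonal (fun i => ((Real.sqrt ((Matrix.posSemidef_conjTranspose_mul_self X).1.eigenvalues i) : ℝ) : ℂ)) *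
    (star ((Matrix.posSemidef_conjTranspose_mul_self X).1.eigenvectorUnitary : Matrix I I ℂ))).trace.re

end

/-!
Factor the coefficient matrix of `v` as `P * C`, where the rows of `C` are an orthonormal basis of
a `k`-dimensional subspace containing the row space. Then `v = (1 ⊗ A)ᴴ p` with `A = C̄` and
`p = vec Pᵀ`; since `A` has orthonormal rows, `(1 ⊗ A)ᴴ` is an isometry, so `p` is a unit vector and
`A` is a contraction. Doing the same for `w` gives `⟨v, X w⟩ = ⟨p, (1 ⊗ A) X (1 ⊗ B)ᴴ q⟩`, which is
bounded by the operator norm.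
-/

section InnerProduct

variable {I J : Type*} [Fintype I] [Fintype J]

lemma inprod_eq_star_dotProduct (v w : I → ℂ) : inprod v w = star v ⬝ᵥ w := rfl

lemma inprod_eq_inner (v w : I → ℂ) :
    inprod v w = inner ℂ (WithLp.toLp 2 v : EuclideanSpace ℂ I) (WithLp.toLp 2 w) := by
  rw [EuclideanSpace.inner_toLp_toLp, dotProduct_comm]
  rfl

lemma inprod_conjTranspose_mulVec (M : Matrix I J ℂ) (x : I → ℂ) (y : J → ℂ) :
    inprod (Mᴴ *ᵥ x) y = inprod x (M *ᵥ y) := by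
  rw [inprod_eq_star_dotProduct, inprod_eq_star_dotProduct, star_mulVec,
    conjTranspose_conjTranspose, dotProduct_mulVec]

lemma unitVec_conjTranspose_mulVec_iff [DecidableEq I] {M : Matrix I J ℂ} (hM : M * Mᴴ = 1)
    {x : I → ℂ} : UnitVec (Mᴴ *ᵥ x) ↔ UnitVec x := by
  rw [UnitVec, UnitVec, inprod_conjTranspose_mulVec, mulVec_mulVec, hM, one_mulVec]

lemma UnitVec.norm_toLp {v : I → ℂ} (hv : UnitVec v) :
    ‖(WithLp.toLp 2 v : EuclideanSpace ℂ I)‖ = 1 := by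
  have h : ‖(WithLp.toLp 2 v : EuclideanSpace ℂ I)‖ ^ 2 = 1 ^ 2 := by
    rw [@norm_sq_eq_re_inner ℂ, ← inprod_eq_inner, hv, one_pow, RCLike.one_re]
  exact (pow_left_inj₀ (norm_nonneg _) zero_le_one two_ne_zero).1 h

lemma norm_inprod_le_one {v w : I → ℂ} (hv : UnitVec v) (hw : UnitVec w) :
    ‖inprod v w‖ ≤ 1 := by
  simpa [inprod_eq_inner, hv.norm_toLp, hw.norm_toLp] using
    norm_inner_le_norm (𝕜 := ℂ) (WithLp.toLp 2 v : EuclideanSpace ℂ I) (WithLp.toLp 2 w)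

end InnerProduct

section OpNorm

variable {I J : Type*} [Fintype I] [Fintype J]

lemma bddAbove_opNorm_set (A : Matrix I J ℂ) :
    BddAbove { t : ℝ | ∃ v w, UnitVec v ∧ UnitVec w ∧ t = ‖inprod v (A *ᵥ w)‖ } := by
  classical
  let T := LinearMap.toContinuousLinearMap (Matrix.toLpLin 2 2 A)
  refine ⟨‖T‖, ?_⟩
  rintro t ⟨a, b, ha, hb, rfl⟩
  calc ‖inprod a (A *ᵥ b)‖
      ≤ ‖(WithLp.toLp 2 a : EuclideanSpace ℂ I)‖ * ‖T (WithLp.toLp 2 b)‖ := by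
        rw [inprod_eq_inner]; exact norm_inner_le_norm _ (T (WithLp.toLp 2 b))
    _ ≤ ‖T‖ := by
        simpa [ha.norm_toLp, hb.norm_toLp] using T.le_opNorm (WithLp.toLp 2 b)

lemma norm_inprod_mulVec_le_opNorm (A : Matrix I J ℂ) {v : I → ℂ} {w : J → ℂ}
    (hv : UnitVec v) (hw : UnitVec w) : ‖inprod v (A *ᵥ w)‖ ≤ opNorm A :=
  le_csSup (bddAbove_opNorm_set A) ⟨v, w, hv, hw, rfl⟩

-- `|⟨v, A w⟩| = |⟨Aᴴ v, w⟩|`, and `Aᴴ` preserves unit vectors.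
lemma opNorm_le_one_of_mul_conjTranspose_eq_one [DecidableEq I] {A : Matrix I J ℂ}
    (hA : A * Aᴴ = 1) : opNorm A ≤ 1 := by
  refine Real.sSup_le ?_ zero_le_one
  rintro t ⟨v, w, hv, hw, rfl⟩
  rw [← inprod_conjTranspose_mulVec]
  exact norm_inprod_le_one ((unitVec_conjTranspose_mulVec_iff hA).2 hv) hw

end OpNorm

theorem Submodule.exists_le_finrank_eq {K V : Type*} [DivisionRing K] [AddCommGroup V]
    [Module K V] [FiniteDimensional K V] (W : Submodule K V) {k : ℕ}
    (hWk : Module.finrank K W ≤ k) (hk : k ≤ Module.finrank K V) :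
    ∃ W' : Submodule K V, W ≤ W' ∧ Module.finrank K W' = k := by
  induction k, hWk using Nat.le_induction with
  | base => exact ⟨W, le_rfl, rfl⟩
  | succ k _ ih =>
    obtain ⟨W', hWW', hW'k⟩ := ih (by omega)
    obtain ⟨x, hx⟩ := SetLike.exists_not_mem_of_ne_top W' fun h => by
      rw [h, finrank_top] at hW'k
      omega
    exact ⟨W' ⊔ span K {x}, hWW'.trans le_sup_left, by rw [finrank_sup_span_singleton hx, hW'k]⟩

theorem Matrix.exists_mul_eq_of_rank_le {𝕜 I J : Type*} [RCLike 𝕜] [Fintype I] [Fintype J]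
    {M : Matrix I J 𝕜} {k : ℕ} (hM : M.rank ≤ k) (hk : k ≤ Fintype.card J) :
    ∃ (P : Matrix I (Fin k) 𝕜) (C : Matrix (Fin k) J 𝕜), C * Cᴴ = 1 ∧ M = P * C := by
  classical
  let e := (WithLp.linearEquiv 2 𝕜 (J → 𝕜)).symm
  let rowSpace : Submodule 𝕜 (EuclideanSpace 𝕜 J) :=
    (Submodule.span 𝕜 (Set.range M.row)).map (e : (J → 𝕜) →ₗ[𝕜] EuclideanSpace 𝕜 J)
  have hrowSpace : Module.finrank 𝕜 rowSpace ≤ k := by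
    rwa [LinearEquiv.finrank_map_eq, ← rank_eq_finrank_span_row]
  obtain ⟨W, hrowSpaceW, hWk⟩ := rowSpace.exists_le_finrank_eq hrowSpace (by simpa using hk)
  let b : OrthonormalBasis (Fin k) 𝕜 W := (stdOrthonormalBasis 𝕜 W).reindex (finCongr hWk)
  refine ⟨of fun i j => inner 𝕜 (b j : EuclideanSpace 𝕜 J) (WithLp.toLp 2 (M i)),
    of fun j t => (b j : EuclideanSpace 𝕜 J) t, ?_, ?_⟩
  · ext i j
    have hb := b.inner_eq_ite j i
    rw [Submodule.coe_inner, EuclideanSpace.inner_eq_star_dotProduct] at hb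
    simpa [mul_apply, one_apply, eq_comm, dotProduct] using hb
  · ext i t
    have hMi : WithLp.toLp 2 (M i) ∈ W := hrowSpaceW ⟨M i, Submodule.subset_span ⟨i, rfl⟩, rfl⟩
    have hrepr := congrArg (fun x : W => (x : EuclideanSpace 𝕜 J) t) (b.sum_repr' ⟨_, hMi⟩)
    simpa [mul_apply] using hrepr.symm

lemma one_kronecker_mul_conjTranspose_eq_one {R I J K : Type*} [CommSemiring R] [StarRing R]
    [Fintype I] [Fintype J] [DecidableEq I] [DecidableEq K] {A : Matrix K J R} (hA : A * Aᴴ = 1) :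
    ((1 : Matrix I I R) ⊗ₖ A) * ((1 : Matrix I I R) ⊗ₖ A)ᴴ = 1 := by
  rw [conjTranspose_kronecker, conjTranspose_one, ← mul_kronecker_mul, one_mul, hA,
    one_kronecker_one]

-- The Schmidt decomposition: the rows of `A` are the conjugated Schmidt vectors of `v`.
lemma exists_eq_conjTranspose_mulVec_of_schmidtRank_le {I J : Type*} [Fintype I] [Fintype J]
    [DecidableEq I] {v : I × J → ℂ} {k : ℕ} (hv : SchmidtRank v ≤ k) (hk : k ≤ Fintype.card J) :
    ∃ A : Matrix (Fin k) J ℂ, A * Aᴴ = 1 ∧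
      ∃ p : I × Fin k → ℂ, v = ((1 : Matrix I I ℂ) ⊗ₖ A)ᴴ *ᵥ p := by
  obtain ⟨P, C, hC, hPC⟩ := exists_mul_eq_of_rank_le hv hk
  refine ⟨Cᵀᴴ, ?_, vec Pᵀ, ?_⟩
  · rw [conjTranspose_conjTranspose, conjTranspose_transpose_eq_transpose_conjTranspose,
      ← transpose_mul, hC, transpose_one]
  · rw [conjTranspose_kronecker, conjTranspose_one, conjTranspose_conjTranspose,
      ← vec_mul_eq_mulVec, ← transpose_mul, ← hPC]
    rfl

theorem exists_contractions_of_schmidt_vectors_general (m n k : ℕ) (hkn : k ≤ n)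
    (v w : Fin m × Fin n → ℂ) (hv : UnitVec v) (hw : UnitVec w)
    (hvk : SchmidtRank v ≤ k) (hwk : SchmidtRank w ≤ k) :
    ∃ A B : Matrix (Fin k) (Fin n) ℂ, opNorm A ≤ 1 ∧ opNorm B ≤ 1 ∧
      ∀ X : Matrix (Fin m × Fin n) (Fin m × Fin n) ℂ,
        ‖inprod v (X.mulVec w)‖ ≤
          opNorm (((1 : Matrix (Fin m) (Fin m) ℂ) ⊗ₖ A) * X *
            (((1 : Matrix (Fin m) (Fin m) ℂ) ⊗ₖ B)ᴴ)) := by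
  obtain ⟨A, hA, p, rfl⟩ :=
    exists_eq_conjTranspose_mulVec_of_schmidtRank_le hvk (by simpa using hkn)
  obtain ⟨B, hB, q, rfl⟩ :=
    exists_eq_conjTranspose_mulVec_of_schmidtRank_le hwk (by simpa using hkn)
  refine ⟨A, B, opNorm_le_one_of_mul_conjTranspose_eq_one hA,
    opNorm_le_one_of_mul_conjTranspose_eq_one hB, fun X => ?_⟩
  rw [inprod_conjTranspose_mulVec, mulVec_mulVec, mulVec_mulVec]
  rw [unitVec_conjTranspose_mulVec_iff (one_kronecker_mul_conjTranspose_eq_one hA)] at hv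
  rw [unitVec_conjTranspose_mulVec_iff (one_kronecker_mul_conjTranspose_eq_one hB)] at hw
  exact norm_inprod_mulVec_le_opNorm _ hv hw

/-- The '≥' direction of Theorem 3.1. -/
theorem exists_contractions_of_schmidt_vectors (m n k : ℕ) (hm : 0 < m) (hn : 0 < n)
    (hk : 0 < k) (hkn : k ≤ n)
    (v w : Fin m × Fin n → ℂ) (hv : UnitVec v) (hw : UnitVec w)
    (hvk : SchmidtRank v ≤ k) (hwk : SchmidtRank w ≤ k) :
    ∃ A B : Matrix (Fin k) (Fin n) ℂ, opNorm A ≤ 1 ∧ opNorm B ≤ 1 ∧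
      ∀ X : Matrix (Fin m × Fin n) (Fin m × Fin n) ℂ,
        ‖inprod v (X.mulVec w)‖ ≤
          opNorm (((1 : Matrix (Fin m) (Fin m) ℂ) ⊗ₖ A) * X *
            (((1 : Matrix (Fin m) (Fin m) ℂ) ⊗ₖ B)ᴴ)) :=
  exists_contractions_of_schmidt_vectors_general m n k hkn v w hv hw hvk hwk
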